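/- arXiv:2202.00734 — 4 statements merged into one kernel-verified Lean document; each statement's English description precedes it below -/
import Mathlib

section
/- The global consistency of an explanation system equals the accuracy of the Gibbs decoder: m^c = 1 − E_G, i.e., Σ_x μ(x)·p(f(x)|e(x)) = 1 − Σ_{π : p(π)>0} p(π)·Σ_y p(y|π)(1 − p(y|π)), which also equals Σ_{π : p(π)>0} p(π)·Σ_y p(y|π)². -/
open Classical

/-- The global consistency equals the accuracy of the Gibbs decoder:
`m^c = 1 - E_G`, which also equals `∑_{π : p(π)>0} p(π) ∑_y p(y|π)²`. -/
theorem global_consistency_eq_gibbs_accuracy {X Y E : Type*}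
    [Fintype X] [Fintype Y] [Fintype E] [Nonempty X] [Nonempty Y] [Nonempty E]
    (μ : X → ℝ) (hμ0 : ∀ x, 0 ≤ μ x) (hμ1 : ∑ x, μ x = 1)
    (f : X → Y) (e : X → E)
    -- p(π) = μ{x : e(x) = π}
    (p : E → ℝ) (hp : ∀ π, p π = ∑ x, if e x = π then μ x else 0)
    -- for p(π) > 0, p(y|π) = μ{x : e(x) = π ∧ f(x) = y} / p(π)
    (pc : Y → E → ℝ)
    (hpc : ∀ y π, 0 < p π →
      pc y π = (∑ x, if e x = π ∧ f x = y then μ x else 0) / p π)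
    -- global consistency m^c = Σ_x μ(x) · p(f(x)|e(x))
    (mc : ℝ) (hmc : mc = ∑ x, μ x * pc (f x) (e x))
    -- Gibbs decoder error
    (EG : ℝ)
    (hEG : EG = ∑ π ∈ Finset.univ.filter (fun π => 0 < p π),
      p π * ∑ y, pc y π * (1 - pc y π)) :
    mc = 1 - EG ∧
    mc = ∑ π ∈ Finset.univ.filter (fun π => 0 < p π),
      p π * ∑ y, (pc y π) ^ 2 := by
  have hp0 : ∀ π, 0 ≤ p π := by
    intro π; rw [hp]
    exact Finset.sum_nonneg (fun x _ => by split <;> simp [hμ0 x])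
  -- numerator identity: p π * pc y π = ∑ x, ite
  have hnum : ∀ y π, 0 < p π →
      (∑ x, if e x = π ∧ f x = y then μ x else 0) = pc y π * p π := by
    intro y π hπ
    rw [hpc y π hπ, div_mul_cancel₀ _ (ne_of_gt hπ)]
  -- sum of p over filter = 1
  have hsum_p : (∑ π ∈ Finset.univ.filter (fun π => 0 < p π), p π) = 1 := by
    have h1 : (∑ π, p π) = 1 := by
      simp only [hp]
      rw [Finset.sum_comm]
      simpa using hμ1
    rw [← h1]
    apply Finset.sum_filter_of_ne
    intro π _ hne
    exact lt_of_le_of_ne (hp0 π) (Ne.symm hne)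
  -- sum of pc over y = 1 for p π > 0
  have hsum_pc : ∀ π, 0 < p π → (∑ y, pc y π) = 1 := by
    intro π hπ
    have : (∑ y, pc y π) * p π = p π := by
      rw [Finset.sum_mul]
      have : ∀ y ∈ Finset.univ, pc y π * p π
          = ∑ x, if e x = π ∧ f x = y then μ x else 0 := by
        intro y _; rw [hnum y π hπ]
      rw [Finset.sum_congr rfl this, Finset.sum_comm, hp]
      apply Finset.sum_congr rfl
      intro x _
      by_cases hx : e x = π <;> simp [hx]
    have := mul_right_cancel₀ (ne_of_gt hπ) (this.trans (one_mul (p π)).symm)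
    exact this
  -- key: mc = ∑ over filter of p π * ∑ pc²
  have key : mc = ∑ π ∈ Finset.univ.filter (fun π => 0 < p π),
      p π * ∑ y, (pc y π) ^ 2 := by
    have hzero : ∀ x, p (e x) = 0 → μ x = 0 := by
      intro x hx
      have hle : μ x ≤ p (e x) := by
        rw [hp]
        have h := Finset.single_le_sum (f := fun z => if e z = e x then μ z else 0)
          (fun z _ => by by_cases h : e z = e x <;> simp [h, hμ0 z]) (Finset.mem_univ x)
        simpa using h
      linarith [hμ0 x, hle, hx.le]
    have step1 : mc = ∑ π ∈ Finset.univ.filter (fun π => 0 < p π),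
        ∑ x, (if e x = π then μ x * pc (f x) (e x) else 0) := by
      rw [hmc]
      rw [Finset.sum_filter_of_ne (f := fun π => ∑ x,
        (if e x = π then μ x * pc (f x) (e x) else 0))]
      · rw [Finset.sum_comm]
        apply Finset.sum_congr rfl
        intro x _
        simp
      · intro π _ hne
        by_contra hnp
        apply hne
        push_neg at hnp
        have hpz : p π = 0 := le_antisymm hnp (hp0 π)
        apply absurd hne
        simp only [not_not]
        apply Finset.sum_eq_zero
        intro x _
        by_cases hx : e x = π
        · simp [hx, hzero x (hx ▸ hpz)]
        · simp [hx]
    rw [step1]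
    apply Finset.sum_congr rfl
    intro π hπ
    rw [Finset.mem_filter] at hπ
    have hπ' := hπ.2
    have inner : ∀ x, (if e x = π then μ x * pc (f x) (e x) else 0)
        = ∑ y, (if e x = π ∧ f x = y then μ x * pc y π else 0) := by
      intro x
      by_cases hx : e x = π
      · simp only [hx, if_true, true_and]
        rw [Finset.sum_ite_eq Finset.univ (f x) (fun y => μ x * pc y π)]
        simp [hx]
      · simp [hx]
    rw [Finset.sum_congr rfl (fun x _ => inner x), Finset.sum_comm]
    rw [Finset.mul_sum]
    apply Finset.sum_congr rfl
    intro y _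
    have : (∑ x, if e x = π ∧ f x = y then μ x * pc y π else 0)
        = pc y π * ∑ x, (if e x = π ∧ f x = y then μ x else 0) := by
      rw [Finset.mul_sum]
      apply Finset.sum_congr rfl
      intro x _
      split <;> ring
    rw [this, hnum y π hπ']
    ring
  refine ⟨?_, key⟩
  rw [key, hEG]
  have : ∀ π ∈ Finset.univ.filter (fun π => 0 < p π),
      p π * ∑ y, pc y π * (1 - pc y π) = p π - p π * ∑ y, (pc y π)^2 := by
    intro π hπ
    rw [Finset.mem_filter] at hπ
    have h1 := hsum_pc π hπ.2
    have : (∑ y, pc y π * (1 - pc y π)) = 1 - ∑ y, (pc y π)^2 := by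
      have : (∑ y, pc y π * (1 - pc y π)) = (∑ y, pc y π) - ∑ y, (pc y π)^2 := by
        rw [← Finset.sum_sub_distrib]
        apply Finset.sum_congr rfl
        intro y _; ring
      rw [this, h1]
    rw [this]; ring
  rw [Finset.sum_congr rfl this, Finset.sum_sub_distrib, hsum_p]
  ring
end

section
/- For an explanation system given by a partition of the instance space (as in a decision tree, where each explanation π corresponds to the cell C_π = {x : e(x) = π}), the global consistency satisfies m^c = 1 − Σ_{π : p(π)>0} p(π) · G(π), where G(π) = 1 − Σ_y p(y|π)² is the Gini index of the predicted labels within C_π. -/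
open Classical

/-!
Split `m^c = Σ_x μ(x) p(f(x)|e(x))` along the cells `C_π`. A cell of mass `0` carries no mass
at all since `μ ≥ 0`, so only cells with `p(π) > 0` contribute. On such a cell, grouping the
instances by their label gives `Σ_y p(y|π) · p(y|π) p(π) = p(π) (1 - G(π))`, and the masses
of the cells with `p(π) > 0` add up to `1`.
-/

open Finset

theorem Finset.sum_mul_comp_eq_sum_mul_sum_fiber {X Y R : Type*} [Fintype Y] [CommSemiring R]
    (s : Finset X) (μ : X → R) (f : X → Y) (c : Y → R) :
    ∑ x ∈ s, μ x * c (f x) = ∑ y, c y * ∑ x ∈ s with f x = y, μ x := by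
  rw [← sum_fiberwise s f]
  refine sum_congr rfl fun y _ => ?_
  rw [mul_sum]
  exact sum_congr rfl fun x hx => by rw [(mem_filter.1 hx).2, mul_comm]

theorem sum_mul_eq_sum_filter_pos_cell_mass {X E : Type*} [Fintype X] [Fintype E]
    {μ : X → ℝ} (hμ : ∀ x, 0 ≤ μ x) (e : X → E) (g : X → ℝ) :
    ∑ x, μ x * g x =
      ∑ π with 0 < ∑ x with e x = π, μ x, ∑ x with e x = π, μ x * g x := by
  rw [← sum_fiberwise univ e]
  refine (sum_filter_of_ne fun π _ hcell => ?_).symm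
  by_contra hmass
  have hzero : ∀ x ∈ univ.filter (e · = π), μ x = 0 :=
    (sum_eq_zero_iff_of_nonneg fun x _ => hμ x).1
      (le_antisymm (not_lt.1 hmass) (sum_nonneg fun x _ => hμ x))
  exact hcell (sum_eq_zero fun x hx => by rw [hzero x hx, zero_mul])

theorem global_consistency_eq_one_sub_gini_general {X Y E : Type*}
    [Fintype X] [Fintype Y] [Fintype E]
    (μ : X → ℝ) (hμ0 : ∀ x, 0 ≤ μ x) (hμ1 : ∑ x, μ x = 1)
    (f : X → Y) (e : X → E)
    -- p(π) = μ{x : e(x) = π}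
    (p : E → ℝ) (hp : ∀ π, p π = ∑ x, if e x = π then μ x else 0)
    -- for p(π) > 0, p(y|π) = μ{x : e(x) = π ∧ f(x) = y} / p(π)
    (pc : Y → E → ℝ)
    (hpc : ∀ y π, 0 < p π →
      pc y π = (∑ x, if e x = π ∧ f x = y then μ x else 0) / p π)
    -- global consistency m^c = Σ_x μ(x) · p(f(x)|e(x))
    (mc : ℝ) (hmc : mc = ∑ x, μ x * pc (f x) (e x))
    -- Gini index of f within C_π
    (G : E → ℝ) (hG : ∀ π, 0 < p π → G π = 1 - ∑ y, (pc y π) ^ 2) :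
    mc = 1 - ∑ π ∈ Finset.univ.filter (fun π => 0 < p π), p π * G π := by
  have hcell_mass : ∀ π, ∑ x with e x = π, μ x = p π := fun π => by rw [hp, sum_filter]
  have hcell : ∀ π, 0 < p π → ∑ x with e x = π, μ x * pc (f x) π = p π * (1 - G π) := by
    intro π hπ
    have hlabel : ∀ y, ∑ x ∈ univ.filter (e · = π) with f x = y, μ x = pc y π * p π := by
      intro y
      rw [filter_filter, hpc y π hπ, sum_filter, div_mul_cancel₀ _ hπ.ne']
    rw [sum_mul_comp_eq_sum_mul_sum_fiber _ μ f (pc · π), hG π hπ, sub_sub_cancel, mul_sum]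
    exact sum_congr rfl fun y _ => by rw [hlabel]; ring
  have htotal : ∑ π with 0 < p π, p π = 1 := by
    simpa [hμ1, hcell_mass] using (sum_mul_eq_sum_filter_pos_cell_mass hμ0 e 1).symm
  calc mc = ∑ π with 0 < p π, p π * (1 - G π) := by
        rw [hmc, sum_mul_eq_sum_filter_pos_cell_mass hμ0 e]
        simp_rw [hcell_mass]
        refine sum_congr rfl fun π hπ => ?_
        rw [← hcell π (mem_filter.1 hπ).2]
        exact sum_congr rfl fun x hx => by rw [(mem_filter.1 hx).2]
    _ = 1 - ∑ π with 0 < p π, p π * G π := by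
        simp only [mul_one_sub, sum_sub_distrib, htotal]

/-- For a partition-based explanation system (e.g. a decision tree), the global
consistency satisfies `m^c = 1 - ∑_{π : p(π)>0} p(π) · G(π)`, where
`G(π) = 1 - ∑_y p(y|π)²` is the Gini index of the predicted labels in `C_π`. -/
theorem global_consistency_eq_one_sub_gini {X Y E : Type*}
    [Fintype X] [Fintype Y] [Fintype E] [Nonempty X] [Nonempty Y] [Nonempty E]
    (μ : X → ℝ) (hμ0 : ∀ x, 0 ≤ μ x) (hμ1 : ∑ x, μ x = 1)
    (f : X → Y) (e : X → E)
    -- p(π) = μ{x : e(x) = π}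
    (p : E → ℝ) (hp : ∀ π, p π = ∑ x, if e x = π then μ x else 0)
    -- for p(π) > 0, p(y|π) = μ{x : e(x) = π ∧ f(x) = y} / p(π)
    (pc : Y → E → ℝ)
    (hpc : ∀ y π, 0 < p π →
      pc y π = (∑ x, if e x = π ∧ f x = y then μ x else 0) / p π)
    -- global consistency m^c = Σ_x μ(x) · p(f(x)|e(x))
    (mc : ℝ) (hmc : mc = ∑ x, μ x * pc (f x) (e x))
    -- Gini index of f within C_π
    (G : E → ℝ) (hG : ∀ π, 0 < p π → G π = 1 - ∑ y, (pc y π) ^ 2) :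
    mc = 1 - ∑ π ∈ Finset.univ.filter (fun π => 0 < p π), p π * G π :=
  global_consistency_eq_one_sub_gini_general μ hμ0 hμ1 f e p hp pc hpc mc hmc G hG
end

section
/- The expected value of the faithfulness estimator over n i.i.d. samples equals E[M̂] = Σ_x μ(x) · (1 − (1 − q(e(x)))^{n−1}) · q(f(x)|e(x)). -/
open Classical

section AuxEstimator
open Finset

theorem sum_fin_succ_decomp {X : Type*} [Fintype X] (k : ℕ) (F : (Fin (k+1) → X) → ℝ) :
    ∑ g : Fin (k+1) → X, F g
      = ∑ x : X, ∑ g : Fin k → X, F (Fin.cons (α := fun _ => X) x g) := by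
  rw [← (Fintype.sum_equiv (Fin.consEquiv (fun _ => X)) _ (fun g => F g) (fun p => rfl))]
  rw [Fintype.sum_prod_type]
  rfl

theorem card_cons_filter {X : Type*} [Fintype X] (k : ℕ) (P : X → Prop) (x : X) (g : Fin k → X) :
    (Finset.univ.filter (fun j => P (Fin.cons (α := fun _ => X) x g j))).card
      = (if P x then 1 else 0) + (Finset.univ.filter (fun j => P (g j))).card := by
  rw [Finset.card_filter, Finset.card_filter, Fin.sum_univ_succ]
  simp

theorem binom_step (k : ℕ) (t u : ℝ) (h : ℕ → ℝ) :
    ∑ a ∈ Finset.range (k+2), ((k+1).choose a : ℝ) * t^a * u^(k+1-a) * h a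
      = t * ∑ a ∈ Finset.range (k+1), (k.choose a : ℝ) * t^a * u^(k-a) * h (a+1)
        + u * ∑ a ∈ Finset.range (k+1), (k.choose a : ℝ) * t^a * u^(k-a) * h a := by
  rw [Finset.sum_range_succ' (fun a => ((k+1).choose a : ℝ) * t^a * u^(k+1-a) * h a)]
  have e1 : ∀ a ∈ Finset.range (k+1),
      ((k+1).choose (a+1) : ℝ) * t^(a+1) * u^(k+1-(a+1)) * h (a+1)
      = (k.choose a : ℝ) * t^(a+1) * u^(k-a) * h (a+1)
        + (k.choose (a+1) : ℝ) * t^(a+1) * u^(k-a) * h (a+1) := by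
    intro a _
    rw [Nat.choose_succ_succ, Nat.succ_sub_succ]
    push_cast
    ring
  rw [Finset.sum_congr rfl e1, Finset.sum_add_distrib]
  have e2 : ∑ a ∈ Finset.range (k+1), (k.choose (a+1) : ℝ) * t^(a+1) * u^(k-a) * h (a+1)
      = ∑ a ∈ Finset.range (k+2), (k.choose a : ℝ) * t^a * u^(k+1-a) * h a
        - (k.choose 0 : ℝ) * t^0 * u^(k+1-0) * h 0 := by
    rw [Finset.sum_range_succ' (fun a => (k.choose a : ℝ) * t^a * u^(k+1-a) * h a)]
    simp only [add_sub_cancel_right]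
    apply Finset.sum_congr rfl
    intro a ha
    rw [Nat.succ_sub_succ]
  rw [e2]
  have e3 : ∑ a ∈ Finset.range (k+2), (k.choose a : ℝ) * t^a * u^(k+1-a) * h a
      = ∑ a ∈ Finset.range (k+1), (k.choose a : ℝ) * t^a * u^(k+1-a) * h a := by
    rw [Finset.sum_range_succ, Nat.choose_succ_self]
    simp
  rw [e3]
  have e4 : ∑ a ∈ Finset.range (k+1), (k.choose a : ℝ) * t^a * u^(k+1-a) * h a
      = ∑ a ∈ Finset.range (k+1), u * ((k.choose a : ℝ) * t^a * u^(k-a) * h a) := by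
    apply Finset.sum_congr rfl
    intro a ha
    have hak : k + 1 - a = (k - a) + 1 := by
      have := Finset.mem_range.mp ha; omega
    rw [hak, pow_succ]
    ring
  have e5 : ∑ a ∈ Finset.range (k+1), (k.choose a : ℝ) * t^(a+1) * u^(k-a) * h (a+1)
      = ∑ a ∈ Finset.range (k+1), t * ((k.choose a : ℝ) * t^a * u^(k-a) * h (a+1)) := by
    apply Finset.sum_congr rfl
    intro a _
    ring
  rw [e4, e5, ← Finset.mul_sum, ← Finset.mul_sum]
  simp
  ring

theorem pushfwd {X : Type*} [Fintype X] (μ : X → ℝ) (hμ1 : ∑ x, μ x = 1)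
    (P : X → Prop) (q : ℝ) (hq : q = ∑ x, if P x then μ x else 0) :
    ∀ (k : ℕ) (h : ℕ → ℝ),
      ∑ g : Fin k → X, (∏ j, μ (g j)) * h (Finset.univ.filter (fun j => P (g j))).card
      = ∑ a ∈ Finset.range (k+1), (k.choose a : ℝ) * q^a * (1-q)^(k-a) * h a := by
  intro k
  induction k with
  | zero => intro h; simp
  | succ k ih =>
    intro h
    rw [sum_fin_succ_decomp k (fun g => (∏ j, μ (g j)) *
      h (Finset.univ.filter (fun j => P (g j))).card)]
    have e0 : ∀ x : X, ∑ g : Fin k → X,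
        (∏ j, μ (Fin.cons (α := fun _ => X) x g j)) *
          h ((Finset.univ.filter (fun j => P (Fin.cons (α := fun _ => X) x g j))).card)
        = μ x * ∑ g : Fin k → X, (∏ j, μ (g j)) *
            h ((Finset.univ.filter (fun j => P (g j))).card + (if P x then 1 else 0)) := by
      intro x
      rw [Finset.mul_sum]
      apply Finset.sum_congr rfl
      intro g _
      rw [Fin.prod_univ_succ, card_cons_filter, add_comm ((if P x then 1 else 0))]
      simp only [Fin.cons_zero, Fin.cons_succ]
      ring
    rw [Finset.sum_congr rfl (fun x _ => e0 x)]
    have e7 : ∀ x : X, μ x * ∑ g : Fin k → X, (∏ j, μ (g j)) *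
            h ((Finset.univ.filter (fun j => P (g j))).card + (if P x then 1 else 0))
        = (if P x then μ x else 0) * ∑ g : Fin k → X, (∏ j, μ (g j)) *
            h ((Finset.univ.filter (fun j => P (g j))).card + 1)
          + (if P x then 0 else μ x) * ∑ g : Fin k → X, (∏ j, μ (g j)) *
            h ((Finset.univ.filter (fun j => P (g j))).card) := by
      intro x
      by_cases hx : P x <;> simp [hx]
    rw [Finset.sum_congr rfl (fun x _ => e7 x), Finset.sum_add_distrib,
      ← Finset.sum_mul, ← Finset.sum_mul]
    have hq' : ∑ x, (if P x then (0:ℝ) else μ x) = 1 - q := by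
      have : ∑ x, ((if P x then μ x else 0) + (if P x then (0:ℝ) else μ x)) = 1 := by
        rw [← hμ1]; apply Finset.sum_congr rfl; intro x _; by_cases hx : P x <;> simp [hx]
      rw [Finset.sum_add_distrib] at this
      rw [← hq] at this
      linarith
    rw [hq', ← hq, ih (fun a => h (a+1)), ih h, ← binom_step k q (1-q) h]

theorem binom_inv (k : ℕ) (q : ℝ) :
    ((k:ℝ)+1) * q * ∑ a ∈ Finset.range (k+1),
        (k.choose a : ℝ) * q^a * (1-q)^(k-a) * (1/((a:ℝ)+1))
      = 1 - (1-q)^(k+1) := by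
  rw [Finset.mul_sum]
  have h1 : ∀ a ∈ Finset.range (k+1),
      ((k:ℝ)+1) * q * ((k.choose a : ℝ) * q^a * (1-q)^(k-a) * (1/((a:ℝ)+1)))
      = q^(a+1) * (1-q)^(k+1-(a+1)) * ((k+1).choose (a+1) : ℝ) := by
    intro a _
    have h2 : ((k:ℝ)+1) * (k.choose a : ℝ) = ((k+1).choose (a+1) : ℝ) * ((a:ℝ)+1) := by
      exact_mod_cast Nat.add_one_mul_choose_eq k a
    rw [Nat.succ_sub_succ]
    have ha : ((a:ℝ)+1) ≠ 0 := by positivity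
    field_simp
    linear_combination q^(a+1) * (1-q)^(k-a) * h2
  rw [Finset.sum_congr rfl h1]
  have hsum : ∑ b ∈ Finset.range (k+2), q^b * (1-q)^(k+1-b) * ((k+1).choose b : ℝ) = 1 := by
    rw [← add_pow]
    simp
  rw [Finset.sum_range_succ' (fun b => q^b * (1-q)^(k+1-b) * ((k+1).choose b : ℝ))] at hsum
  simp only [pow_zero, Nat.choose_zero_right, Nat.cast_one, mul_one, one_mul,
    Nat.sub_zero] at hsum
  linarith

theorem perm_invar {X : Type*} [Fintype X] {k : ℕ} (μ : X → ℝ)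
    (P Q : X → Prop) (j : Fin (k+1)) (c : ℕ → ℝ) :
    ∑ g : Fin (k+1) → X, (∏ i, μ (g i)) *
        (if Q (g j) then c (Finset.univ.filter (fun i => P (g i))).card else 0)
    = ∑ g : Fin (k+1) → X, (∏ i, μ (g i)) *
        (if Q (g 0) then c (Finset.univ.filter (fun i => P (g i))).card else 0) := by
  classical
  set σ : Equiv.Perm (Fin (k+1)) := Equiv.swap 0 j with hσ
  set e : (Fin (k+1) → X) ≃ (Fin (k+1) → X) := Equiv.arrowCongr σ (Equiv.refl X) with he
  rw [← Equiv.sum_comp e (fun g => (∏ i, μ (g i)) *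
        (if Q (g 0) then c (Finset.univ.filter (fun i => P (g i))).card else 0))]
  apply Finset.sum_congr rfl
  intro g _
  have hev : ∀ i, (e g) i = g (σ.symm i) := fun i => rfl
  have h0 : (e g) 0 = g j := by
    rw [hev]
    simp [hσ]
  have hprod : ∏ i, μ ((e g) i) = ∏ i, μ (g i) := by
    simp only [hev]
    exact Equiv.prod_comp σ.symm (fun i => μ (g i))
  have hcard : (Finset.univ.filter (fun i => P ((e g) i))).card
      = (Finset.univ.filter (fun i => P (g i))).card := by
    simp only [hev]
    rw [Finset.card_filter, Finset.card_filter]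
    exact Equiv.sum_comp σ.symm (fun i => if P (g i) then 1 else 0)
  rw [h0, hprod, hcard]

theorem core_calc {X : Type*} [Fintype X] (μ : X → ℝ) (hμ1 : ∑ x, μ x = 1)
    (P Q : X → Prop) (hPQ : ∀ x, Q x → P x)
    (q s : ℝ) (hq : q = ∑ x, if P x then μ x else 0)
    (hs : s = ∑ x, if Q x then μ x else 0) (hqpos : q ≠ 0) (k : ℕ) :
    ∑ g : Fin (k+1) → X, (∏ i, μ (g i)) *
        (if 0 < (Finset.univ.filter (fun i => P (g i))).card then
          ((Finset.univ.filter (fun i => Q (g i))).card : ℝ) /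
          ((Finset.univ.filter (fun i => P (g i))).card : ℝ)
        else 0)
    = (s / q) * (1 - (1-q)^(k+1)) := by
  classical
  set c : ℕ → ℝ := fun a => if 0 < a then 1/(a:ℝ) else 0 with hc
  -- step 1: rewrite the ratio as a sum of indicators
  have step1 : ∀ g : Fin (k+1) → X,
      (if 0 < (Finset.univ.filter (fun i => P (g i))).card then
          ((Finset.univ.filter (fun i => Q (g i))).card : ℝ) /
          ((Finset.univ.filter (fun i => P (g i))).card : ℝ)
        else 0)
      = ∑ j, (if Q (g j) then c (Finset.univ.filter (fun i => P (g i))).card else 0) := by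
    intro g
    set A := (Finset.univ.filter (fun i => P (g i))).card with hA
    by_cases hA0 : 0 < A
    · simp only [hA0, if_true, hc]
      rw [Finset.sum_ite, Finset.sum_const, Finset.sum_const, smul_zero, add_zero,
        nsmul_eq_mul, div_eq_mul_inv, one_div]
    · simp only [hA0, if_false]
      have : ∀ j, ¬ Q (g j) := by
        intro j hj
        apply hA0
        rw [hA, Finset.card_pos]
        exact ⟨j, Finset.mem_filter.mpr ⟨Finset.mem_univ j, hPQ _ hj⟩⟩
      simp [this]
  rw [Finset.sum_congr rfl (fun g _ => by rw [step1 g])]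
  have swap1 : ∑ g : Fin (k+1) → X, (∏ i, μ (g i)) *
      ∑ j, (if Q (g j) then c (Finset.univ.filter (fun i => P (g i))).card else 0)
      = ∑ j : Fin (k+1), ∑ g : Fin (k+1) → X, (∏ i, μ (g i)) *
          (if Q (g j) then c (Finset.univ.filter (fun i => P (g i))).card else 0) := by
    rw [Finset.sum_comm]
    apply Finset.sum_congr rfl
    intro g _
    rw [Finset.mul_sum]
  rw [swap1]
  rw [Finset.sum_congr rfl (fun j _ => perm_invar μ P Q j c)]
  rw [Finset.sum_const, Finset.card_univ, Fintype.card_fin, nsmul_eq_mul]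
  -- peel coordinate 0
  rw [sum_fin_succ_decomp k (fun g => (∏ i, μ (g i)) *
      (if Q (g 0) then c (Finset.univ.filter (fun i => P (g i))).card else 0))]
  set W := ∑ g : Fin k → X, (∏ i, μ (g i)) *
      (1/(((Finset.univ.filter (fun i => P (g i))).card : ℝ)+1)) with hW
  have inner : ∀ x : X, (∑ g : Fin k → X,
      (∏ i, μ (Fin.cons (α := fun _ => X) x g i)) *
        (if Q ((Fin.cons (α := fun _ => X) x g) 0) then
          c (Finset.univ.filter (fun i => P (Fin.cons (α := fun _ => X) x g i))).card else 0))
      = (if Q x then μ x else 0) * W := by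
    intro x
    by_cases hx : Q x
    · simp only [hx, Fin.cons_zero, if_true, hW, Finset.mul_sum]
      apply Finset.sum_congr rfl
      intro g _
      rw [Fin.prod_univ_succ, card_cons_filter]
      simp only [Fin.cons_zero, Fin.cons_succ, hPQ x hx, if_true, hc]
      have hpos : 0 < 1 + (Finset.univ.filter (fun i => P (g i))).card := by omega
      rw [if_pos hpos]
      push_cast
      ring_nf
    · simp [hx, Fin.cons_zero]
  rw [Finset.sum_congr rfl (fun x _ => inner x), ← Finset.sum_mul, ← hs]
  have hWval : ((k:ℝ)+1) * q * W = 1 - (1-q)^(k+1) := by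
    rw [hW, pushfwd μ hμ1 P q hq k (fun a => 1/((a:ℝ)+1))]
    exact binom_inv k q
  have hk : ((k:ℝ)+1) ≠ 0 := by positivity
  field_simp
  push_cast
  linear_combination s * hWval

theorem filter_inst_eq {α : Type*} (s : Finset α) (p : α → Prop) (h1 h2 : DecidablePred p) :
    @Finset.filter α p h1 s = @Finset.filter α p h2 s := by
  have : h1 = h2 := Subsingleton.elim h1 h2
  rw [this]

theorem core_calc' {X : Type*} [Fintype X] (μ : X → ℝ) (hμ1 : ∑ x, μ x = 1)
    (P Q : X → Prop) (hPQ : ∀ x, Q x → P x)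
    (q s : ℝ) (hq : q = ∑ x, if P x then μ x else 0)
    (hs : s = ∑ x, if Q x then μ x else 0) (hqpos : q ≠ 0) (m : ℕ) :
    ∑ g : Fin m → X, (∏ i, μ (g i)) *
        (if 0 < (Finset.univ.filter (fun i => P (g i))).card then
          ((Finset.univ.filter (fun i => Q (g i))).card : ℝ) /
          ((Finset.univ.filter (fun i => P (g i))).card : ℝ)
        else 0)
    = (s / q) * (1 - (1-q)^m) := by
  cases m with
  | zero => simp
  | succ k => exact core_calc μ hμ1 P Q hPQ q s hq hs hqpos k

theorem estim_sym {X Y E : Type*} [Fintype X] (μ : X → ℝ) (f : X → Y) (e : X → E)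
    (R : X → E → Prop) {k : ℕ} (i : Fin (k+1)) :
    ∑ xs : Fin (k+1) → X, (∏ j, μ (xs j)) *
      (if 1 < (Finset.univ.filter (fun j => R (xs j) (e (xs i)))).card then
        (((Finset.univ.filter
            (fun j => R (xs j) (e (xs i)) ∧ f (xs j) = f (xs i))).card : ℝ) - 1) /
        (((Finset.univ.filter (fun j => R (xs j) (e (xs i)))).card : ℝ) - 1)
      else 0)
    = ∑ xs : Fin (k+1) → X, (∏ j, μ (xs j)) *
      (if 1 < (Finset.univ.filter (fun j => R (xs j) (e (xs 0)))).card then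
        (((Finset.univ.filter
            (fun j => R (xs j) (e (xs 0)) ∧ f (xs j) = f (xs 0))).card : ℝ) - 1) /
        (((Finset.univ.filter (fun j => R (xs j) (e (xs 0)))).card : ℝ) - 1)
      else 0) := by
  classical
  set σ : Equiv.Perm (Fin (k+1)) := Equiv.swap 0 i with hσ
  set ee : (Fin (k+1) → X) ≃ (Fin (k+1) → X) := Equiv.arrowCongr σ (Equiv.refl X) with hee
  rw [← Equiv.sum_comp ee (fun xs => (∏ j, μ (xs j)) *
      (if 1 < (Finset.univ.filter (fun j => R (xs j) (e (xs 0)))).card then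
        (((Finset.univ.filter
            (fun j => R (xs j) (e (xs 0)) ∧ f (xs j) = f (xs 0))).card : ℝ) - 1) /
        (((Finset.univ.filter (fun j => R (xs j) (e (xs 0)))).card : ℝ) - 1)
      else 0))]
  apply Finset.sum_congr rfl
  intro xs _
  have hev : ∀ j, (ee xs) j = xs (σ.symm j) := fun j => rfl
  have h0 : (ee xs) 0 = xs i := by
    rw [hev]
    simp [hσ]
  have hprod : ∏ j, μ ((ee xs) j) = ∏ j, μ (xs j) := by
    simp only [hev]
    exact Equiv.prod_comp σ.symm (fun j => μ (xs j))
  have hcard1 : ∀ π : E, (Finset.univ.filter (fun j => R ((ee xs) j) π)).card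
      = (Finset.univ.filter (fun j => R (xs j) π)).card := by
    intro π
    simp only [hev]
    rw [Finset.card_filter, Finset.card_filter]
    exact Equiv.sum_comp σ.symm (fun j => if R (xs j) π then 1 else 0)
  have hcard2 : ∀ (π : E) (y : Y),
      (Finset.univ.filter (fun j => R ((ee xs) j) π ∧ f ((ee xs) j) = y)).card
      = (Finset.univ.filter (fun j => R (xs j) π ∧ f (xs j) = y)).card := by
    intro π y
    simp only [hev]
    rw [Finset.card_filter, Finset.card_filter]
    exact Equiv.sum_comp σ.symm (fun j => if R (xs j) π ∧ f (xs j) = y then 1 else 0)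
  simp only [h0, hprod, hcard1, hcard2]

end AuxEstimator

/-- The expected value of the faithfulness estimator over `n` i.i.d. samples is
`E[M̂] = Σ_x μ(x) · (1 - (1 - q(e(x)))^(n-1)) · q(f(x)|e(x))`. -/
theorem estimator_expectation {X Y E : Type*}
    [Fintype X] [Fintype Y] [Fintype E] [Nonempty X] [Nonempty Y] [Nonempty E]
    (μ : X → ℝ) (hμ0 : ∀ x, 0 ≤ μ x) (hμ1 : ∑ x, μ x = 1)
    (f : X → Y) (e : X → E)
    (R : X → E → Prop) (hR : ∀ x, R x (e x))
    -- q(π) = μ{x : R(x,π)}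
    (q : E → ℝ) (hq : ∀ π, q π = ∑ x, if R x π then μ x else 0)
    -- for q(π) > 0, q(y|π) = μ{x : R(x,π) ∧ f(x) = y} / q(π)
    (qc : Y → E → ℝ)
    (hqc : ∀ y π, 0 < q π →
      qc y π = (∑ x, if R x π ∧ f x = y then μ x else 0) / q π)
    (n : ℕ) (hn : 1 ≤ n)
    -- the estimator M̂ on a sample (x_1,…,x_n)
    (Mhat : (Fin n → X) → ℝ)
    (hM : ∀ xs, Mhat xs = (1 / (n : ℝ)) * ∑ i,
      if 1 < (Finset.univ.filter (fun j => R (xs j) (e (xs i)))).card then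
        (((Finset.univ.filter
            (fun j => R (xs j) (e (xs i)) ∧ f (xs j) = f (xs i))).card : ℝ) - 1) /
        (((Finset.univ.filter (fun j => R (xs j) (e (xs i)))).card : ℝ) - 1)
      else 0) :
    -- expectation under the n-fold product measure μ^{⊗n}
    ∑ xs : Fin n → X, (∏ i, μ (xs i)) * Mhat xs =
      ∑ x, μ x * ((1 - (1 - q (e x)) ^ (n - 1)) * qc (f x) (e x)) := by
  classical
  obtain ⟨k, rfl⟩ : ∃ k, n = k + 1 := ⟨n - 1, by omega⟩
  simp only [hM]
  have swapC : ∀ (C : ℝ) (T : Fin (k+1) → (Fin (k+1) → X) → ℝ),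
      ∑ xs : Fin (k+1) → X, (∏ j, μ (xs j)) * (C * ∑ i, T i xs)
      = C * ∑ i : Fin (k+1), ∑ xs : Fin (k+1) → X, (∏ j, μ (xs j)) * T i xs := by
    intro C T
    calc ∑ xs : Fin (k+1) → X, (∏ j, μ (xs j)) * (C * ∑ i, T i xs)
        = ∑ xs : Fin (k+1) → X, ∑ i : Fin (k+1), C * ((∏ j, μ (xs j)) * T i xs) := by
          apply Finset.sum_congr rfl
          intro xs _
          rw [Finset.mul_sum, Finset.mul_sum]
          apply Finset.sum_congr rfl
          intro i _
          ring
      _ = ∑ i : Fin (k+1), ∑ xs : Fin (k+1) → X, C * ((∏ j, μ (xs j)) * T i xs) :=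
          Finset.sum_comm
      _ = C * ∑ i : Fin (k+1), ∑ xs : Fin (k+1) → X, (∏ j, μ (xs j)) * T i xs := by
          rw [Finset.mul_sum]
          apply Finset.sum_congr rfl
          intro i _
          rw [Finset.mul_sum]
  rw [swapC (1 / ((k+1 : ℕ) : ℝ)) (fun i xs =>
      if 1 < (Finset.univ.filter (fun j => R (xs j) (e (xs i)))).card then
        (((Finset.univ.filter
            (fun j => R (xs j) (e (xs i)) ∧ f (xs j) = f (xs i))).card : ℝ) - 1) /
        (((Finset.univ.filter (fun j => R (xs j) (e (xs i)))).card : ℝ) - 1)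
      else 0)]
  rw [Finset.sum_congr rfl (fun i _ => estim_sym μ f e R i)]
  rw [Finset.sum_const, Finset.card_univ, Fintype.card_fin, nsmul_eq_mul]
  have hk1 : ((k+1 : ℕ) : ℝ) ≠ 0 := by positivity
  rw [← mul_assoc, one_div, inv_mul_cancel₀ hk1, one_mul]
  rw [sum_fin_succ_decomp k (fun xs => (∏ j, μ (xs j)) *
      (if 1 < (Finset.univ.filter (fun j => R (xs j) (e (xs 0)))).card then
        (((Finset.univ.filter
            (fun j => R (xs j) (e (xs 0)) ∧ f (xs j) = f (xs 0))).card : ℝ) - 1) /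
        (((Finset.univ.filter (fun j => R (xs j) (e (xs 0)))).card : ℝ) - 1)
      else 0))]
  apply Finset.sum_congr rfl
  intro x _
  have peel : ∑ g : Fin k → X, (∏ j, μ (Fin.cons (α := fun _ => X) x g j)) *
      (if 1 < (Finset.univ.filter
            (fun j => R (Fin.cons (α := fun _ => X) x g j)
              (e (Fin.cons (α := fun _ => X) x g 0)))).card then
        (((Finset.univ.filter
            (fun j => R (Fin.cons (α := fun _ => X) x g j)
                (e (Fin.cons (α := fun _ => X) x g 0))
              ∧ f (Fin.cons (α := fun _ => X) x g j)
                = f (Fin.cons (α := fun _ => X) x g 0))).card : ℝ) - 1) /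
        (((Finset.univ.filter
            (fun j => R (Fin.cons (α := fun _ => X) x g j)
              (e (Fin.cons (α := fun _ => X) x g 0)))).card : ℝ) - 1)
      else 0)
      = μ x * ∑ g : Fin k → X, (∏ j, μ (g j)) *
          (if 0 < (Finset.univ.filter (fun i => R (g i) (e x))).card then
            ((Finset.univ.filter (fun i => R (g i) (e x) ∧ f (g i) = f x)).card : ℝ) /
            ((Finset.univ.filter (fun i => R (g i) (e x))).card : ℝ)
          else 0) := by
    rw [Finset.mul_sum]
    apply Finset.sum_congr rfl
    intro g _
    simp only [Fin.cons_zero]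
    rw [Fin.prod_univ_succ]
    simp only [Fin.cons_zero, Fin.cons_succ]
    have hc1 : (Finset.univ.filter
        (fun j => R (Fin.cons (α := fun _ => X) x g j) (e x))).card
        = 1 + (Finset.univ.filter (fun j => R (g j) (e x))).card := by
      rw [Finset.card_filter, Finset.card_filter, Fin.sum_univ_succ]
      simp [hR x]
    have hc2 : (Finset.univ.filter
        (fun j => R (Fin.cons (α := fun _ => X) x g j) (e x)
          ∧ f (Fin.cons (α := fun _ => X) x g j) = f x)).card
        = 1 + (Finset.univ.filter (fun j => R (g j) (e x) ∧ f (g j) = f x)).card := by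
      rw [Finset.card_filter, Finset.card_filter, Fin.sum_univ_succ]
      simp [hR x]
    rw [hc1, hc2]
    set A := (Finset.univ.filter (fun i => R (g i) (e x))).card
    set B := (Finset.univ.filter (fun i => R (g i) (e x) ∧ f (g i) = f x)).card
    have h1 : (1 < 1 + A) ↔ (0 < A) := by omega
    rw [← mul_assoc]
    congr 1
    by_cases hA : 0 < A
    · rw [if_pos (h1.mpr hA), if_pos hA]
      push_cast
      ring_nf
    · rw [if_neg (fun h => hA (h1.mp h)), if_neg hA]
  rw [peel]
  by_cases hx0 : μ x = 0
  · rw [hx0]; ring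
  · have hxpos : 0 < μ x := lt_of_le_of_ne (hμ0 x) (Ne.symm hx0)
    have hqx : 0 < q (e x) := by
      rw [hq (e x)]
      calc (0:ℝ) < μ x := hxpos
        _ = (if R x (e x) then μ x else 0) := by rw [if_pos (hR x)]
        _ ≤ ∑ z, if R z (e x) then μ z else 0 := by
            apply Finset.single_le_sum (f := fun z => if R z (e x) then μ z else 0)
            · intro z _
              by_cases hz : R z (e x) <;> simp [hz, hμ0 z]
            · exact Finset.mem_univ x
    have hcore := core_calc' μ hμ1 (fun z => R z (e x)) (fun z => R z (e x) ∧ f z = f x)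
      (fun z hz => hz.1) (q (e x)) (∑ z, if R z (e x) ∧ f z = f x then μ z else 0)
      (hq (e x))
      (by apply Finset.sum_congr rfl; intro z _;
          by_cases hz : R z (e x) ∧ f z = f x <;> simp [hz])
      (ne_of_gt hqx) k
    have hfil : ∀ g : Fin k → X,
        @Finset.filter _ (fun i => R (g i) (e x) ∧ f (g i) = f x)
          (fun i => Classical.propDecidable _) Finset.univ
        = Finset.univ.filter (fun i => R (g i) (e x) ∧ f (g i) = f x) :=
      fun g => filter_inst_eq _ _ _ _
    simp only [hfil] at hcore
    rw [hcore]
    rw [hqc (f x) (e x) hqx]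
    simp only [Nat.add_sub_cancel]
    ring
end

section
/- The bias of the faithfulness estimator is bounded as |E[M̂] − m| ≤ Σ_{π ∈ E} p(π) · exp(−(n−1)·q(π)), where m = Σ_x μ(x) · q(f(x)|e(x)) is the true faithfulness measure. -/
/-!
Condition on the `i`-th sample `x`. The other `n - 1` samples are i.i.d., and the `i`-th summand
of `M̂` becomes `L / K`, where `K` counts the other samples in the reference class `e x` and `L`
those among them with label `f x`. Write `L / K` as the sum over the other samples `x_j` of
`1[x_j ∈ class, f x_j = f x] / K`. Each term factors through the `j`-th coordinate, so it is
`q(f x | e x)` times the same term without the label condition; those terms sum to `1[K > 0]`.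
Hence `E[L / K] = q(f x | e x) (1 - (1 - q (e x)) ^ (n - 1))`, the bias is
`-∑ x, μ x q(f x | e x) (1 - q (e x)) ^ (n - 1)`, and `(1 - q) ^ (n - 1) ≤ exp (-(n - 1) q)`.
-/

open Finset

theorem abs_mul_mul_one_sub_pow_sub_le {a c t : ℝ} (k : ℕ) (ha : 0 ≤ a) (hc : c ∈ Set.Icc 0 1)
    (ht : t ≤ 1) :
    |a * c * (1 - (1 - t) ^ k) - a * c| ≤ a * Real.exp (-(k * t)) := by
  have ht' : 0 ≤ 1 - t := sub_nonneg.mpr ht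
  calc |a * c * (1 - (1 - t) ^ k) - a * c| = a * c * (1 - t) ^ k := by
        rw [show a * c * (1 - (1 - t) ^ k) - a * c = -(a * c * (1 - t) ^ k) by ring, abs_neg,
          abs_of_nonneg (by have := hc.1; positivity)]
    _ ≤ a * 1 * Real.exp (-t) ^ k := by
        gcongr
        · exact hc.2
        · exact Real.one_sub_le_exp_neg t
    _ = a * Real.exp (-(k * t)) := by rw [← Real.exp_nat_mul, mul_one, mul_neg]

namespace IIDSample

section funSplitAt

variable {X J : Type*} [DecidableEq J]

theorem funSplitAt_symm_apply_self (i : J) (x : X) (s' : {j // j ≠ i} → X) :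
    (Equiv.funSplitAt i X).symm (x, s') i = x := by
  simp [Equiv.funSplitAt_symm_apply]

theorem funSplitAt_symm_apply_coe (i : J) (x : X) (s' : {j // j ≠ i} → X) (j : {j // j ≠ i}) :
    (Equiv.funSplitAt i X).symm (x, s') j = s' j := by
  simp [Equiv.funSplitAt_symm_apply, j.2]

variable [Fintype J]

theorem card_filter_funSplitAt_symm (i : J) (P : X → Prop) [DecidablePred P] (x : X)
    (s' : {j // j ≠ i} → X) :
    #{j | P ((Equiv.funSplitAt i X).symm (x, s') j)} = #{j | P (s' j)} + if P x then 1 else 0 := by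
  rw [card_filter, card_filter, Fintype.sum_eq_add_sum_subtype_ne _ i, add_comm]
  simp only [funSplitAt_symm_apply_self, funSplitAt_symm_apply_coe]

end funSplitAt

variable {X J : Type*} [Fintype X] [Fintype J] [DecidableEq J] (ν : X → ℝ)

def mass (A : X → Prop) [DecidablePred A] : ℝ := ∑ x, if A x then ν x else 0

theorem mass_nonneg (hν0 : ∀ x, 0 ≤ ν x) (A : X → Prop) [DecidablePred A] : 0 ≤ mass ν A :=
  sum_nonneg fun x _ => by split_ifs <;> simp [hν0 x]

theorem mass_mono (hν0 : ∀ x, 0 ≤ ν x) {A B : X → Prop} [DecidablePred A] [DecidablePred B]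
    (hBA : ∀ x, B x → A x) :
    mass ν B ≤ mass ν A :=
  sum_le_sum fun x _ => by
    by_cases hB : B x
    · simp [hB, hBA x hB]
    · by_cases hA : A x <;> simp [hA, hB, hν0 x]

theorem le_mass (hν0 : ∀ x, 0 ≤ ν x) {A : X → Prop} [DecidablePred A] {x : X} (hx : A x) :
    ν x ≤ mass ν A := by
  unfold mass
  simpa [hx] using single_le_sum (f := fun y => if A y then ν y else 0)
    (fun y _ => by split_ifs <;> simp [hν0 y]) (mem_univ x)

theorem mass_le_one (hν0 : ∀ x, 0 ≤ ν x) (hν : ∑ x, ν x = 1) (A : X → Prop) [DecidablePred A] :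
    mass ν A ≤ 1 := by
  simpa [mass, hν] using mass_mono ν hν0 (A := fun _ => True) (B := A) fun _ _ => trivial

theorem sum_mass_fiber_mul {E : Type*} [Fintype E] [DecidableEq E] (e : X → E) (g : E → ℝ) :
    ∑ π, mass ν (e · = π) * g π = ∑ x, ν x * g (e x) := by
  simp only [mass, sum_mul, ite_mul, zero_mul]
  rw [sum_comm]
  simp

theorem sum_prod_eq_one (hν : ∑ x, ν x = 1) : ∑ s : J → X, ∏ j, ν (s j) = 1 := by
  rw [← Fintype.prod_sum]; simp [hν]

theorem sum_prod_mul_card_filter_eq_zero (hν : ∑ x, ν x = 1) (A : X → Prop) [DecidablePred A] :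
    ∑ s : J → X, (∏ j, ν (s j)) * (if #{j | A (s j)} = 0 then 1 else 0) =
      (1 - mass ν A) ^ Fintype.card J := by
  have hcompl : ∑ x, (if A x then 0 else ν x) = 1 - mass ν A := by
    rw [← hν, mass, eq_sub_iff_add_eq, ← sum_add_distrib]
    exact sum_congr rfl fun x _ => by split_ifs <;> simp
  have hprod : ∀ s : J → X, (∏ j, ν (s j)) * (if #{j | A (s j)} = 0 then 1 else 0) =
      ∏ j, if A (s j) then 0 else ν (s j) := by
    intro s
    by_cases h : ∃ j, A (s j)
    · obtain ⟨j, hj⟩ := h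
      rw [if_neg (card_ne_zero_of_mem (by simpa using hj)), mul_zero]
      exact (prod_eq_zero (mem_univ j) (by simp [hj])).symm
    · push Not at h
      simp [h]
  simp only [hprod]
  rw [← hcompl, ← card_univ, ← prod_const, Fintype.prod_sum]

theorem sum_prod_mul_funSplitAt (i : J) (F : (J → X) → ℝ) :
    ∑ s : J → X, (∏ j, ν (s j)) * F s =
      ∑ x, ν x * ∑ s' : {j // j ≠ i} → X,
        (∏ j, ν (s' j)) * F ((Equiv.funSplitAt i X).symm (x, s')) := by
  rw [← (Equiv.funSplitAt i X).symm.sum_comp, Fintype.sum_prod_type]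
  refine sum_congr rfl fun x _ => ?_
  rw [mul_sum]
  refine sum_congr rfl fun s' _ => ?_
  rw [Fintype.prod_eq_mul_prod_subtype_ne _ i, mul_assoc]
  simp only [funSplitAt_symm_apply_self, funSplitAt_symm_apply_coe]

theorem sum_prod_mul_ite_mul_card (i : J) {A C : X → Prop} [DecidablePred A] [DecidablePred C]
    (hCA : ∀ x, C x → A x) (h : ℕ → ℝ) :
    ∑ s : J → X, (∏ j, ν (s j)) * ((if C (s i) then 1 else 0) * h #{j | A (s j)}) =
      mass ν C * ∑ s' : {j // j ≠ i} → X, (∏ j, ν (s' j)) * h (#{j | A (s' j)} + 1) := by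
  rw [sum_prod_mul_funSplitAt ν i, mass, sum_mul]
  refine sum_congr rfl fun x _ => ?_
  by_cases hC : C x
  · rw [if_pos hC]
    refine congrArg _ (sum_congr rfl fun s' _ => ?_)
    rw [funSplitAt_symm_apply_self, if_pos hC, card_filter_funSplitAt_symm, if_pos (hCA x hC),
      one_mul]
  · simp [hC]

theorem mass_mul_sum_prod_card_div_card (hν : ∑ x, ν x = 1) {A B : X → Prop} [DecidablePred A]
    [DecidablePred B] (hBA : ∀ x, B x → A x) :
    mass ν A * ∑ s : J → X, (∏ j, ν (s j)) * ((#{j | B (s j)} : ℝ) / #{j | A (s j)}) =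
      mass ν B * (1 - (1 - mass ν A) ^ Fintype.card J) := by
  have hsplit : ∀ (P : X → Prop) [DecidablePred P] (s : J → X),
      (#{j | P (s j)} : ℝ) / #{j | A (s j)} =
        ∑ i, (if P (s i) then 1 else 0) * (#{j | A (s j)} : ℝ)⁻¹ := by
    intro P _ s
    rw [card_filter, Nat.cast_sum, div_eq_mul_inv, sum_mul]
    simp only [Nat.cast_ite, Nat.cast_one, Nat.cast_zero]
  have hindicator : ∀ s : J → X, (#{j | A (s j)} : ℝ) / #{j | A (s j)} =
      1 - if #{j | A (s j)} = 0 then 1 else 0 := by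
    intro s
    split_ifs with h
    · simp [h]
    · rw [div_self (by exact_mod_cast h), sub_zero]
  calc mass ν A * ∑ s : J → X, (∏ j, ν (s j)) * ((#{j | B (s j)} : ℝ) / #{j | A (s j)})
      = ∑ i, mass ν A * ∑ s : J → X, (∏ j, ν (s j)) *
          ((if B (s i) then 1 else 0) * (#{j | A (s j)} : ℝ)⁻¹) := by
        simp only [hsplit B, mul_sum]
        rw [sum_comm]
    _ = ∑ i, mass ν B * ∑ s : J → X, (∏ j, ν (s j)) *
          ((if A (s i) then 1 else 0) * (#{j | A (s j)} : ℝ)⁻¹) := by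
        refine sum_congr rfl fun i _ => ?_
        have hB := sum_prod_mul_ite_mul_card ν i hBA fun k => (k : ℝ)⁻¹
        have hA := sum_prod_mul_ite_mul_card ν i (C := A) (fun _ h => h) fun k => (k : ℝ)⁻¹
        beta_reduce at hB hA
        rw [hB, hA, mul_left_comm]
    _ = mass ν B * ∑ s : J → X, (∏ j, ν (s j)) * ((#{j | A (s j)} : ℝ) / #{j | A (s j)}) := by
        simp only [hsplit A, mul_sum]
        rw [sum_comm]
    _ = mass ν B * (1 - (1 - mass ν A) ^ Fintype.card J) := by
        simp only [hindicator, mul_sub, mul_one, sum_sub_distrib, sum_prod_eq_one ν hν,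
          sum_prod_mul_card_filter_eq_zero ν hν]

theorem mass_div_mass_mem_Icc (hν0 : ∀ x, 0 ≤ ν x) {A B : X → Prop} [DecidablePred A]
    [DecidablePred B] (hBA : ∀ x, B x → A x) : mass ν B / mass ν A ∈ Set.Icc 0 1 :=
  ⟨div_nonneg (mass_nonneg ν hν0 B) (mass_nonneg ν hν0 A),
    div_le_one_of_le₀ (mass_mono ν hν0 hBA) (mass_nonneg ν hν0 A)⟩

-- `A x` is the reference class of a sample `x` and `B x` its part sharing the label of `x`;
-- both counts below include the `i`-th sample itself.
noncomputable def leaveOneOutRatio (A B : X → X → Prop) [∀ x, DecidablePred (A x)]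
    [∀ x, DecidablePred (B x)] (s : J → X) (i : J) : ℝ :=
  if 1 < #{j | A (s i) (s j)} then
    ((#{j | B (s i) (s j)} : ℝ) - 1) / ((#{j | A (s i) (s j)} : ℝ) - 1)
  else 0

theorem sum_prod_mul_leaveOneOutRatio (i : J) {A B : X → X → Prop} [∀ x, DecidablePred (A x)]
    [∀ x, DecidablePred (B x)] (hA : ∀ x, A x x) (hB : ∀ x, B x x) :
    ∑ s : J → X, (∏ j, ν (s j)) * leaveOneOutRatio A B s i =
      ∑ x, ν x * ∑ s' : {j // j ≠ i} → X,
        (∏ j, ν (s' j)) * ((#{j | B x (s' j)} : ℝ) / #{j | A x (s' j)}) := by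
  rw [sum_prod_mul_funSplitAt ν i]
  refine sum_congr rfl fun x _ => congrArg _ (sum_congr rfl fun s' _ => congrArg _ ?_)
  rw [leaveOneOutRatio, funSplitAt_symm_apply_self, card_filter_funSplitAt_symm,
    card_filter_funSplitAt_symm, if_pos (hA x), if_pos (hB x)]
  push_cast
  -- `L / 0 = 0` in `ℝ` covers the case where no other sample lies in the class of `x`.
  split_ifs with h
  · ring_nf
  · simp [show #{j | A x (s' j)} = 0 by omega]

theorem sum_prod_mul_leaveOneOutRatio_eq (hν0 : ∀ x, 0 ≤ ν x) (hν : ∑ x, ν x = 1) (i : J)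
    {A B : X → X → Prop} [∀ x, DecidablePred (A x)] [∀ x, DecidablePred (B x)]
    (hA : ∀ x, A x x) (hB : ∀ x, B x x) (hBA : ∀ x y, B x y → A x y) :
    ∑ s : J → X, (∏ j, ν (s j)) * leaveOneOutRatio A B s i =
      ∑ x, ν x * (mass ν (B x) / mass ν (A x)) *
        (1 - (1 - mass ν (A x)) ^ (Fintype.card J - 1)) := by
  rw [sum_prod_mul_leaveOneOutRatio ν i hA hB]
  refine sum_congr rfl fun x _ => ?_
  rcases (hν0 x).eq_or_lt with h0 | hpos
  · simp [← h0]
  have hmass : 0 < mass ν (A x) := hpos.trans_le (le_mass ν hν0 (hA x))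
  have key := mass_mul_sum_prod_card_div_card (J := {j // j ≠ i}) ν hν (hBA x)
  simp only [Fintype.card_subtype_compl, Fintype.card_unique] at key
  rw [mul_assoc, div_mul_eq_mul_div, ← key, mul_div_cancel_left₀ _ hmass.ne']

theorem sum_prod_mul_mean_leaveOneOutRatio (hν0 : ∀ x, 0 ≤ ν x) (hν : ∑ x, ν x = 1)
    {A B : X → X → Prop} [∀ x, DecidablePred (A x)] [∀ x, DecidablePred (B x)]
    (hA : ∀ x, A x x) (hB : ∀ x, B x x) (hBA : ∀ x y, B x y → A x y) :
    ∑ s : J → X, (∏ j, ν (s j)) * (1 / (Fintype.card J : ℝ) * ∑ i, leaveOneOutRatio A B s i) =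
      ∑ x, ν x * (mass ν (B x) / mass ν (A x)) *
        (1 - (1 - mass ν (A x)) ^ (Fintype.card J - 1)) := by
  rcases (Fintype.card J).eq_zero_or_pos with h0 | hpos
  · simp [h0]
  calc _ = 1 / (Fintype.card J : ℝ) *
        ∑ i, ∑ s : J → X, (∏ j, ν (s j)) * leaveOneOutRatio A B s i := by
        simp only [mul_sum, mul_left_comm _ (1 / (Fintype.card J : ℝ))]
        exact sum_comm
    _ = _ := by
        simp only [sum_prod_mul_leaveOneOutRatio_eq ν hν0 hν _ hA hB hBA, sum_const, card_univ,
          nsmul_eq_mul]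
        field_simp

end IIDSample

open IIDSample

open Classical

theorem estimator_bias_le_general {X Y E : Type*}
    [Fintype X] [Fintype E]
    (μ : X → ℝ) (hμ0 : ∀ x, 0 ≤ μ x) (hμ1 : ∑ x, μ x = 1)
    (f : X → Y) (e : X → E)
    (R : X → E → Prop) (hR : ∀ x, R x (e x))
    -- q(π) = μ{x : R(x,π)}
    (q : E → ℝ) (hq : ∀ π, q π = ∑ x, if R x π then μ x else 0)
    -- p(π) = μ{x : e(x) = π}
    (p : E → ℝ) (hp : ∀ π, p π = ∑ x, if e x = π then μ x else 0)
    -- for q(π) > 0, q(y|π) = μ{x : R(x,π) ∧ f(x) = y} / q(π)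
    (qc : Y → E → ℝ)
    (hqc : ∀ y π, 0 < q π →
      qc y π = (∑ x, if R x π ∧ f x = y then μ x else 0) / q π)
    -- true faithfulness measure
    (m : ℝ) (hm : m = ∑ x, μ x * qc (f x) (e x))
    (n : ℕ) (hn : 1 ≤ n)
    -- the estimator M̂ on a sample (x_1,…,x_n)
    (Mhat : (Fin n → X) → ℝ)
    (hM : ∀ xs, Mhat xs = (1 / (n : ℝ)) * ∑ i,
      if 1 < (Finset.univ.filter (fun j => R (xs j) (e (xs i)))).card then
        (((Finset.univ.filter
            (fun j => R (xs j) (e (xs i)) ∧ f (xs j) = f (xs i))).card : ℝ) - 1) /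
        (((Finset.univ.filter (fun j => R (xs j) (e (xs i)))).card : ℝ) - 1)
      else 0) :
    |(∑ xs : Fin n → X, (∏ i, μ (xs i)) * Mhat xs) - m| ≤
      ∑ π, p π * Real.exp (-(((n : ℝ) - 1) * q π)) := by
  have hqc_eq : ∀ x, 0 < μ x →
      qc (f x) (e x) = mass μ (fun y => R y (e x) ∧ f y = f x) / mass μ (fun y => R y (e x)) := by
    intro x hx
    rw [hqc _ _ (by rw [hq]; exact hx.trans_le (le_mass μ hμ0 (hR x))), hq]
    rfl
  have hmean : ∑ xs : Fin n → X, (∏ i, μ (xs i)) * Mhat xs =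
      ∑ x, μ x * qc (f x) (e x) * (1 - (1 - q (e x)) ^ (n - 1)) := by
    have h := sum_prod_mul_mean_leaveOneOutRatio (J := Fin n) μ hμ0 hμ1
      (A := fun x y => R y (e x)) (B := fun x y => R y (e x) ∧ f y = f x) hR
      (fun x => ⟨hR x, rfl⟩) fun _ _ h => h.1
    rw [Fintype.card_fin] at h
    simp only [hM]
    refine Eq.trans (by exact h) (sum_congr rfl fun x _ => ?_)
    rcases (hμ0 x).eq_or_lt with h0 | hpos
    · simp [← h0]
    · rw [hqc_eq x hpos, hq]; rfl
  have hfiber : ∑ π, p π * Real.exp (-(((n : ℝ) - 1) * q π)) =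
      ∑ x, μ x * Real.exp (-(((n : ℝ) - 1) * q (e x))) := by
    simp only [hp]
    exact sum_mass_fiber_mul μ e _
  have hcast : (n : ℝ) - 1 = ((n - 1 : ℕ) : ℝ) := by rw [Nat.cast_sub hn, Nat.cast_one]
  rw [hmean, hm, ← sum_sub_distrib, hfiber, hcast]
  refine (abs_sum_le_sum_abs _ _).trans (sum_le_sum fun x _ => ?_)
  rcases (hμ0 x).eq_or_lt with h0 | hpos
  · simp [← h0]
  · rw [hqc_eq x hpos, hq]
    exact abs_mul_mul_one_sub_pow_sub_le _ (hμ0 x) (mass_div_mass_mem_Icc μ hμ0 fun _ h => h.1)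
      (mass_le_one μ hμ0 hμ1 _)

/-- The bias of the faithfulness estimator is bounded as
`|E[M̂] − m| ≤ Σ_π p(π) · exp(−(n−1)·q(π))`,
where `m = Σ_x μ(x) · q(f(x)|e(x))` is the true faithfulness measure. -/
theorem estimator_bias_le {X Y E : Type*}
    [Fintype X] [Fintype Y] [Fintype E] [Nonempty X] [Nonempty Y] [Nonempty E]
    (μ : X → ℝ) (hμ0 : ∀ x, 0 ≤ μ x) (hμ1 : ∑ x, μ x = 1)
    (f : X → Y) (e : X → E)
    (R : X → E → Prop) (hR : ∀ x, R x (e x))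
    -- q(π) = μ{x : R(x,π)}
    (q : E → ℝ) (hq : ∀ π, q π = ∑ x, if R x π then μ x else 0)
    -- p(π) = μ{x : e(x) = π}
    (p : E → ℝ) (hp : ∀ π, p π = ∑ x, if e x = π then μ x else 0)
    -- for q(π) > 0, q(y|π) = μ{x : R(x,π) ∧ f(x) = y} / q(π)
    (qc : Y → E → ℝ)
    (hqc : ∀ y π, 0 < q π →
      qc y π = (∑ x, if R x π ∧ f x = y then μ x else 0) / q π)
    -- true faithfulness measure
    (m : ℝ) (hm : m = ∑ x, μ x * qc (f x) (e x))
    (n : ℕ) (hn : 1 ≤ n)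
    -- the estimator M̂ on a sample (x_1,…,x_n)
    (Mhat : (Fin n → X) → ℝ)
    (hM : ∀ xs, Mhat xs = (1 / (n : ℝ)) * ∑ i,
      if 1 < (Finset.univ.filter (fun j => R (xs j) (e (xs i)))).card then
        (((Finset.univ.filter
            (fun j => R (xs j) (e (xs i)) ∧ f (xs j) = f (xs i))).card : ℝ) - 1) /
        (((Finset.univ.filter (fun j => R (xs j) (e (xs i)))).card : ℝ) - 1)
      else 0) :
    |(∑ xs : Fin n → X, (∏ i, μ (xs i)) * Mhat xs) - m| ≤
      ∑ π, p π * Real.exp (-(((n : ℝ) - 1) * q π)) :=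
  estimator_bias_le_general μ hμ0 hμ1 f e R hR q hq p hp qc hqc m hm n hn Mhat hM
end
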